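/- For every t ∈ ℝ, the quantity σ_j^{−2} ∫_ℝ e^{i·2^j t·λ} f_G(λ) |ψ̂(2^j λ)|² dλ is real and converges, as j → ∞, to ρ(t) = (∫_ℝ |ψ̂(η)|² |η|^{β−1} dη)^{−1} ∫_ℝ e^{itζ} |ψ̂(ζ)|² |ζ|^{β−1} dζ. -/

import Mathlib

/-!
Substituting `ζ = 2 ^ j λ` and using `f_G(λ) = C_G(λ) |λ| ^ (β - 1)`, both `σ_j²` and the
numerator become integrals against the weight `C_G(2 ^ (-j) ζ) |ψ̂(ζ)|² |ζ| ^ (β - 1)`, up to the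
same factor `2 ^ (-j β)`, which cancels in the quotient. Since `C_G` is bounded and continuous and
`|ψ̂(ζ)|² |ζ| ^ (β - 1) = |C_ψ̂(ζ)|² |ζ| ^ (2α + β - 1)` is integrable, dominated convergence
replaces `C_G(2 ^ (-j) ζ)` by `C_G(0)`, which cancels as well. The quotient is real because the
weight is even: `C_G` is even, and `|ψ̂|` is even because `ψ` is real.
-/

open MeasureTheory Filter

/-- Fourier transform `ψ̂(λ) = ∫ e^{-iλt} ψ(t) dt`. -/
noncomputable def fhat (ψ : ℝ → ℝ) (l : ℝ) : ℂ :=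
  ∫ t : ℝ, Complex.exp (-(Complex.I * (l : ℂ) * (t : ℂ))) * (ψ t : ℂ)

open Set Topology

theorem Integrable.of_even_of_integrableOn_Ioi {E : Type*} [NormedAddCommGroup E] {f : ℝ → E}
    (heven : ∀ x, f (-x) = f x) (hf : IntegrableOn f (Ioi 0)) : Integrable f := by
  have hIio : IntegrableOn f (Iio 0) := by
    have h := IntegrableOn.comp_neg_Iio (c := (0 : ℝ)) (μ := volume) (by rwa [neg_zero])
    simpa only [heven] using h
  rw [← integrableOn_univ, ← Iio_union_Ici, integrableOn_union]
  exact ⟨hIio, (integrableOn_Ici_iff_integrableOn_Ioi).mpr hf⟩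

theorem integrable_abs_rpow_mul_exp_neg_mul_abs {s b : ℝ} (hs : -1 < s) (hb : 0 < b) :
    Integrable fun x : ℝ => |x| ^ s * Real.exp (-b * |x|) := by
  refine Integrable.of_even_of_integrableOn_Ioi (fun x => by rw [abs_neg]) ?_
  refine (integrableOn_rpow_mul_exp_neg_mul_rpow hs one_pos hb).congr_fun (fun x hx => ?_)
    measurableSet_Ioi
  simp [abs_of_pos (mem_Ioi.mp hx)]

theorem integrable_norm_sq_mul_abs_rpow {c : ℝ → ℂ} {K κ p : ℝ} (hc : Continuous c)
    (hdecay : ∀ x, ‖c x‖ ≤ K * Real.exp (-κ * |x|)) (hκ : 0 < κ) (hp : 0 ≤ p) :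
    Integrable fun x => ‖c x‖ ^ 2 * |x| ^ p := by
  have hdom := (integrable_abs_rpow_mul_exp_neg_mul_abs (by linarith) (by linarith : 0 < 2 * κ))
    |>.const_mul (K ^ 2)
  refine hdom.mono' ?_ (Eventually.of_forall fun x => ?_)
  · exact ((hc.norm.pow 2).mul
      (continuous_abs.rpow_const fun _ => Or.inr hp)).aestronglyMeasurable
  · have hsq : ‖c x‖ ^ 2 ≤ K ^ 2 * Real.exp (-(2 * κ) * |x|) := by
      calc ‖c x‖ ^ 2 ≤ (K * Real.exp (-κ * |x|)) ^ 2 :=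
            pow_le_pow_left₀ (norm_nonneg _) (hdecay x) 2
        _ = K ^ 2 * Real.exp (-(2 * κ) * |x|) := by rw [mul_pow, ← Real.exp_nat_mul]; ring_nf
    rw [Real.norm_of_nonneg (by positivity)]
    calc ‖c x‖ ^ 2 * |x| ^ p ≤ K ^ 2 * Real.exp (-(2 * κ) * |x|) * |x| ^ p := by gcongr
      _ = K ^ 2 * (|x| ^ p * Real.exp (-(2 * κ) * |x|)) := by ring

theorem integral_norm_sq_mul_abs_rpow_pos {c : ℝ → ℂ} {p : ℝ} (hc : Continuous c)
    (hc0 : c 0 ≠ 0) (hp : 0 ≤ p) (hint : Integrable fun x => ‖c x‖ ^ 2 * |x| ^ p) :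
    0 < ∫ x, ‖c x‖ ^ 2 * |x| ^ p := by
  obtain ⟨x, hcx, hx⟩ : ∃ x, c x ≠ 0 ∧ x ≠ 0 :=
    ((hc.continuousAt.eventually_ne hc0).filter_mono nhdsWithin_le_nhds |>.and
      self_mem_nhdsWithin).exists (f := 𝓝[≠] (0 : ℝ))
  refine integral_pos_of_integrable_nonneg_nonzero (x := x)
    ((hc.norm.pow 2).mul (continuous_abs.rpow_const fun _ => Or.inr hp)) hint
    (fun y => by positivity) ?_
  have := abs_pos.mpr hx
  positivity

theorem fhat_neg (ψ : ℝ → ℝ) (l : ℝ) : fhat ψ (-l) = starRingEnd ℂ (fhat ψ l) := by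
  rw [fhat, fhat, ← integral_conj]
  congr 1 with t
  simp [← Complex.exp_conj]

theorem norm_fhat_neg (ψ : ℝ → ℝ) (l : ℝ) : ‖fhat ψ (-l)‖ = ‖fhat ψ l‖ := by
  rw [fhat_neg, Complex.norm_conj]

theorem norm_mul_abs_rpow_sq_mul_abs_rpow (c : ℂ) (x : ℝ) {α q : ℝ} (hq : q ≠ 0)
    (hαq : 2 * α + q ≠ 0) :
    ‖c * ((|x| ^ α : ℝ) : ℂ)‖ ^ 2 * |x| ^ q = ‖c‖ ^ 2 * |x| ^ (2 * α + q) := by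
  rcases eq_or_ne x 0 with rfl | hx
  -- both sides vanish, since `(0 : ℝ) ^ q = 0` for `q ≠ 0` even when `q < 0`
  · simp [Real.zero_rpow hq, Real.zero_rpow hαq]
  · have hx' := abs_pos.mpr hx
    rw [norm_mul, Complex.norm_real, Real.norm_of_nonneg (by positivity), mul_pow,
      Real.rpow_add hx', mul_comm 2 α, Real.rpow_mul hx'.le, Real.rpow_two, mul_assoc]

noncomputable def oscIntegral (g : ℝ → ℝ) (t : ℝ) : ℂ :=
  ∫ x : ℝ, Complex.exp (Complex.I * t * x) * g x

theorem oscIntegral_zero (g : ℝ → ℝ) : oscIntegral g 0 = ((∫ x, g x : ℝ) : ℂ) := by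
  simp [oscIntegral, integral_complex_ofReal]

theorem oscIntegral_const_mul (c : ℝ) (g : ℝ → ℝ) (t : ℝ) :
    oscIntegral (fun x => c * g x) t = c * oscIntegral g t := by
  rw [oscIntegral, oscIntegral, ← integral_const_mul]
  congr 1 with x
  push_cast
  ring

theorem oscIntegral_congr_ae {g g' : ℝ → ℝ} (h : g =ᵐ[volume] g') (t : ℝ) :
    oscIntegral g t = oscIntegral g' t :=
  integral_congr_ae (h.mono fun x hx => by simp only [hx])

theorem oscIntegral_comp_mul_left (g : ℝ → ℝ) {a : ℝ} (ha : 0 < a) (t : ℝ) :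
    oscIntegral (fun x => g (a * x)) (a * t) = (a⁻¹ : ℝ) * oscIntegral g t := by
  have h := Measure.integral_comp_mul_left
    (fun y : ℝ => Complex.exp (Complex.I * t * y) * g y) a
  rw [abs_of_pos (inv_pos.mpr ha), Complex.real_smul] at h
  rw [oscIntegral, oscIntegral, ← h]
  congr 1 with x
  push_cast
  ring_nf

theorem im_oscIntegral_of_even {g : ℝ → ℝ} (heven : ∀ x, g (-x) = g x) (t : ℝ) :
    (oscIntegral g t).im = 0 := by
  suffices starRingEnd ℂ (oscIntegral g t) = oscIntegral g t from Complex.conj_eq_iff_im.mp this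
  -- conjugating the integrand amounts to reflecting `x ↦ -x`
  rw [oscIntegral, ← integral_conj, ← integral_neg_eq_self]
  congr 1 with x
  simp [← Complex.exp_conj, heven]

theorem tendsto_oscIntegral_comp_mul {ι : Type*} {l : Filter ι} [l.IsCountablyGenerated]
    {C h : ℝ → ℝ} {M : ℝ} (hC : Continuous C) (hCM : ∀ x, |C x| ≤ M) (hh : Integrable h)
    {s : ι → ℝ} (hs : Tendsto s l (𝓝 0)) (t : ℝ) :
    Tendsto (fun n => oscIntegral (fun x => C (s n * x) * h x) t) l
      (𝓝 (C 0 * oscIntegral h t)) := by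
  rw [← oscIntegral_const_mul]
  have hexp : ∀ x : ℝ, ‖Complex.exp (Complex.I * t * x)‖ = 1 := fun x => by
    rw [Complex.norm_exp]; simp
  refine tendsto_integral_filter_of_dominated_convergence (fun x => M * ‖h x‖) ?_ ?_
    (hh.norm.const_mul M) ?_
  · refine Eventually.of_forall fun n => ?_
    refine (Continuous.aestronglyMeasurable (by fun_prop)).mul
      (Complex.continuous_ofReal.comp_aestronglyMeasurable
        ((hC.comp (continuous_const_mul (s n))).aestronglyMeasurable.mul
          hh.aestronglyMeasurable))
  · refine Eventually.of_forall fun n => Eventually.of_forall fun x => ?_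
    simp only [norm_mul, hexp, one_mul, Complex.norm_real, Real.norm_eq_abs]
    exact mul_le_mul_of_nonneg_right (hCM _) (abs_nonneg _)
  · refine Eventually.of_forall fun x => ?_
    have hCx : Tendsto (fun n => C (s n * x)) l (𝓝 (C 0)) :=
      (hC.tendsto 0).comp (by simpa using hs.mul_const x)
    exact tendsto_const_nhds.mul (Complex.continuous_ofReal.tendsto _ |>.comp (hCx.mul_const _))

noncomputable def normalizedOscIntegral (g : ℝ → ℝ) (t : ℝ) : ℂ :=
  (oscIntegral g 0)⁻¹ * oscIntegral g t

theorem im_normalizedOscIntegral_of_even {g : ℝ → ℝ} (heven : ∀ x, g (-x) = g x) (t : ℝ) :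
    (normalizedOscIntegral g t).im = 0 := by
  rw [normalizedOscIntegral, oscIntegral_zero, ← Complex.ofReal_inv, Complex.im_ofReal_mul,
    im_oscIntegral_of_even heven, mul_zero]

theorem tendsto_normalizedOscIntegral_comp_mul {ι : Type*} {l : Filter ι}
    [l.IsCountablyGenerated] {C h : ℝ → ℝ} {M : ℝ} (hC : Continuous C) (hCM : ∀ x, |C x| ≤ M)
    (hC0 : C 0 ≠ 0) (hh : Integrable h) (hh0 : ∫ x, h x ≠ 0) {s : ι → ℝ}
    (hs : Tendsto s l (𝓝 0)) (t : ℝ) :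
    Tendsto (fun n => normalizedOscIntegral (fun x => C (s n * x) * h x) t) l
      (𝓝 (normalizedOscIntegral h t)) := by
  have hlim0 : (C 0 : ℂ) * oscIntegral h 0 ≠ 0 := by
    rw [oscIntegral_zero]; exact_mod_cast mul_ne_zero hC0 hh0
  unfold normalizedOscIntegral
  convert ((tendsto_oscIntegral_comp_mul hC hCM hh hs 0).inv₀ hlim0).mul
    (tendsto_oscIntegral_comp_mul hC hCM hh hs t) using 2
  rw [mul_inv, mul_mul_mul_comm, inv_mul_cancel₀ (by exact_mod_cast hC0), one_mul]

section HomogeneousWeight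

variable {β : ℝ} {C f : ℝ → ℝ}

theorem oscIntegral_weight_mul_comp_mul_left (hf : ∀ x : ℝ, x ≠ 0 → f x = C x * |x| ^ (β - 1))
    (F : ℝ → ℝ) {a : ℝ} (ha : 0 < a) (t : ℝ) :
    oscIntegral (fun x => f x * F (a * x)) (a * t) = (a⁻¹ * a⁻¹ ^ (β - 1) : ℝ) *
      oscIntegral (fun y => C (a⁻¹ * y) * (F y * |y| ^ (β - 1))) t := by
  have hcomp :
      (fun x => f x * F (a * x)) = fun x => (fun y => f (a⁻¹ * y) * F y) (a * x) := by
    funext x; simp [inv_mul_cancel_left₀ ha.ne']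
  have hscale : (fun y => f (a⁻¹ * y) * F y) =ᵐ[volume]
      fun y => a⁻¹ ^ (β - 1) * (C (a⁻¹ * y) * (F y * |y| ^ (β - 1))) := by
    filter_upwards [Measure.ae_ne volume 0] with y hy
    rw [hf _ (mul_ne_zero (inv_ne_zero ha.ne') hy), abs_mul, abs_of_pos (inv_pos.mpr ha),
      Real.mul_rpow (inv_pos.mpr ha).le (abs_nonneg y)]
    ring
  rw [hcomp, oscIntegral_comp_mul_left (fun y => f (a⁻¹ * y) * F y) ha,
    oscIntegral_congr_ae hscale, oscIntegral_const_mul]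
  push_cast
  ring

theorem normalizedOscIntegral_weight_mul_comp_mul_left
    (hf : ∀ x : ℝ, x ≠ 0 → f x = C x * |x| ^ (β - 1)) (F : ℝ → ℝ) {a : ℝ} (ha : 0 < a) (t : ℝ) :
    normalizedOscIntegral (fun x => f x * F (a * x)) (a * t)
      = normalizedOscIntegral (fun y => C (a⁻¹ * y) * (F y * |y| ^ (β - 1))) t := by
  have hc : ((a⁻¹ * a⁻¹ ^ (β - 1) : ℝ) : ℂ) ≠ 0 := by
    have := inv_pos.mpr ha
    exact_mod_cast (by positivity : 0 < a⁻¹ * a⁻¹ ^ (β - 1)).ne'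
  have h0 := oscIntegral_weight_mul_comp_mul_left hf F ha 0
  rw [mul_zero] at h0
  rw [normalizedOscIntegral, normalizedOscIntegral, h0,
    oscIntegral_weight_mul_comp_mul_left hf F ha, mul_inv, mul_mul_mul_comm, inv_mul_cancel₀ hc,
    one_mul]

end HomogeneousWeight

theorem stmt_9_general
    (β : ℝ) (hβ : β ∈ Set.Ioo (0 : ℝ) 1)
    (C_G : ℝ → ℝ) (hCG_cont : Continuous C_G) (hCG_bdd : ∃ M : ℝ, ∀ x, C_G x ≤ M)
    (hCG_nonneg : ∀ x, 0 ≤ C_G x) (hCG_even : ∀ x, C_G (-x) = C_G x)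
    (hCG0 : 0 < C_G 0)
    (f_G : ℝ → ℝ)
    (hfG : ∀ x : ℝ, x ≠ 0 → f_G x = C_G x * |x| ^ (β - 1))
    (ψ : ℝ → ℝ)
    (α K κ : ℝ) (hα : 1 ≤ α) (hκ : 0 < κ)
    (Cψ : ℝ → ℂ) (hCψ_cont : Continuous Cψ)
    (hCψ0 : 0 < (Cψ 0).re ∧ (Cψ 0).im = 0)
    (hCψ_bdd : ∀ l : ℝ, ‖Cψ l‖ ≤ K * Real.exp (-κ * |l|))
    (hhat : ∀ l : ℝ, fhat ψ l = Cψ l * ((|l| ^ α : ℝ) : ℂ))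
    (sigma2 : ℕ → ℝ)
    (hsigma2 : ∀ j : ℕ, sigma2 j =
      ∫ l : ℝ, f_G l * ‖fhat ψ ((2 : ℝ) ^ j * l)‖ ^ 2)
    (Q : ℕ → ℝ → ℂ)
    (hQ : ∀ j : ℕ, ∀ t : ℝ, Q j t =
      (((sigma2 j)⁻¹ : ℝ) : ℂ) *
        ∫ l : ℝ, Complex.exp (Complex.I * (((2 : ℝ) ^ j * t * l : ℝ) : ℂ)) *
          ((f_G l * ‖fhat ψ ((2 : ℝ) ^ j * l)‖ ^ 2 : ℝ) : ℂ))
    (ρ : ℝ → ℂ)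
    (hρ : ∀ t : ℝ, ρ t =
      (((∫ η : ℝ, ‖fhat ψ η‖ ^ 2 * |η| ^ (β - 1)) : ℝ) : ℂ)⁻¹ *
        ∫ ζ : ℝ, Complex.exp (Complex.I * (t : ℂ) * (ζ : ℂ)) *
          ((‖fhat ψ ζ‖ ^ 2 * |ζ| ^ (β - 1) : ℝ) : ℂ)) :
    ∀ t : ℝ, (∀ j : ℕ, (Q j t).im = 0) ∧
      Tendsto (fun j : ℕ => Q j t) atTop (nhds (ρ t)) := by
  intro t
  obtain ⟨M, hM⟩ := hCG_bdd
  set h : ℝ → ℝ := fun ζ => ‖fhat ψ ζ‖ ^ 2 * |ζ| ^ (β - 1) with hh_def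
  have hp : 0 < 2 * α + (β - 1) := by linarith [hβ.1]
  have hh_eq : h = fun ζ => ‖Cψ ζ‖ ^ 2 * |ζ| ^ (2 * α + (β - 1)) := funext fun ζ => by
    simp only [h, hhat]
    exact norm_mul_abs_rpow_sq_mul_abs_rpow _ _ (by linarith [hβ.2]) hp.ne'
  have hh_int : Integrable h :=
    hh_eq ▸ integrable_norm_sq_mul_abs_rpow hCψ_cont hCψ_bdd hκ hp.le
  have hh_pos : 0 < ∫ ζ, h ζ := by
    have hCψ0' : Cψ 0 ≠ 0 := fun h0 => by simp [h0] at hCψ0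
    rw [hh_eq] at hh_int ⊢
    exact integral_norm_sq_mul_abs_rpow_pos hCψ_cont hCψ0' hp.le hh_int
  set H : ℕ → ℝ → ℝ := fun j y => C_G (((2 : ℝ) ^ j)⁻¹ * y) * h y with hH_def
  have hQ_eq : ∀ j, Q j t = normalizedOscIntegral (H j) t := fun j => by
    rw [hQ, hsigma2, ← normalizedOscIntegral_weight_mul_comp_mul_left hfG _ (by positivity),
      normalizedOscIntegral, oscIntegral_zero, Complex.ofReal_inv, oscIntegral]
    congr 2 with l
    push_cast
    ring_nf
  have hρ_eq : ρ t = normalizedOscIntegral h t := by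
    rw [hρ, normalizedOscIntegral, oscIntegral_zero]
    rfl
  refine ⟨fun j => hQ_eq j ▸ im_normalizedOscIntegral_of_even (fun y => ?_) t, ?_⟩
  · simp only [hH_def, hh_def, mul_neg, hCG_even, norm_fhat_neg, abs_neg]
  · simp_rw [hρ_eq, hQ_eq]
    exact tendsto_normalizedOscIntegral_comp_mul hCG_cont
      (fun x => (abs_of_nonneg (hCG_nonneg x)).trans_le (hM x)) hCG0.ne' hh_int hh_pos.ne'
      (tendsto_inv_atTop_zero.comp (tendsto_pow_atTop_atTop_of_one_lt one_lt_two)) t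

theorem stmt_9
    (β : ℝ) (hβ : β ∈ Set.Ioo (0 : ℝ) 1)
    (C_G : ℝ → ℝ) (hCG_cont : Continuous C_G) (hCG_bdd : ∃ M : ℝ, ∀ x, C_G x ≤ M)
    (hCG_nonneg : ∀ x, 0 ≤ C_G x) (hCG_even : ∀ x, C_G (-x) = C_G x)
    (hCG0 : 0 < C_G 0)
    (f_G : ℝ → ℝ) (hfG_nonneg : ∀ x, 0 ≤ f_G x)
    (hfG : ∀ x : ℝ, x ≠ 0 → f_G x = C_G x * |x| ^ (β - 1))
    (hfG_int : Integrable f_G)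
    (ψ : ℝ → ℝ) (hψ_int : Integrable ψ) (hψ_sq : Integrable (fun t => (ψ t) ^ 2))
    (hψ_zero : (∫ t : ℝ, ψ t) = 0)
    (α K κ : ℝ) (hα : 1 ≤ α) (hK : 0 < K) (hκ : 0 < κ)
    (Cψ : ℝ → ℂ) (hCψ_cont : Continuous Cψ)
    (hCψ0 : 0 < (Cψ 0).re ∧ (Cψ 0).im = 0)
    (hCψ_bdd : ∀ l : ℝ, ‖Cψ l‖ ≤ K * Real.exp (-κ * |l|))
    (hhat : ∀ l : ℝ, fhat ψ l = Cψ l * ((|l| ^ α : ℝ) : ℂ))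
    (sigma2 : ℕ → ℝ)
    (hsigma2 : ∀ j : ℕ, sigma2 j =
      ∫ l : ℝ, f_G l * ‖fhat ψ ((2 : ℝ) ^ j * l)‖ ^ 2)
    (Q : ℕ → ℝ → ℂ)
    (hQ : ∀ j : ℕ, ∀ t : ℝ, Q j t =
      (((sigma2 j)⁻¹ : ℝ) : ℂ) *
        ∫ l : ℝ, Complex.exp (Complex.I * (((2 : ℝ) ^ j * t * l : ℝ) : ℂ)) *
          ((f_G l * ‖fhat ψ ((2 : ℝ) ^ j * l)‖ ^ 2 : ℝ) : ℂ))
    (ρ : ℝ → ℂ)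
    (hρ : ∀ t : ℝ, ρ t =
      (((∫ η : ℝ, ‖fhat ψ η‖ ^ 2 * |η| ^ (β - 1)) : ℝ) : ℂ)⁻¹ *
        ∫ ζ : ℝ, Complex.exp (Complex.I * (t : ℂ) * (ζ : ℂ)) *
          ((‖fhat ψ ζ‖ ^ 2 * |ζ| ^ (β - 1) : ℝ) : ℂ)) :
    ∀ t : ℝ, (∀ j : ℕ, (Q j t).im = 0) ∧
      Tendsto (fun j : ℕ => Q j t) atTop (nhds (ρ t)) :=
  stmt_9_general β hβ C_G hCG_cont hCG_bdd hCG_nonneg hCG_even hCG0 f_G hfG ψ α K κ hα hκ Cψ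
    hCψ_cont hCψ0 hCψ_bdd hhat sigma2 hsigma2 Q hQ ρ hρ
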